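/- arXiv:2002.01534 — 3 statements merged into one kernel-verified Lean document; each statement's English description precedes it below -/
import Mathlib

section
/- Let V be a 3-dimensional real inner product space, let h be a symmetric bilinear form on V (the Hessian ∇²u), and let x be a vector (the gradient ∇u) with |x| ≠ 0. Define X = h(x,·)♯ − (1/3)(tr h)x. Then |X| ≤ √(2/3)·|x|·√(|h|² − (1/3)(tr h)²), where |h| is the Hilbert–Schmidt norm of h. -/
/-!
Writing `A = h - (tr h / 3) I` for the traceless part of `h`, we have `X = A x` and
`|h|² - (tr h)² / 3 = |A|²`. In an orthonormal eigenbasis of `A`, with eigenvalues `λᵢ` and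
coordinates `cᵢ` of `x`, `|A x|² = ∑ λᵢ² cᵢ²` and `|A|² = ∑ λᵢ²`. Since `∑ λᵢ = 0`, each
`λᵢ = -∑_{j ≠ i} λⱼ`, so Cauchy–Schwarz gives `n λᵢ² ≤ (n - 1) ∑ λⱼ²` in dimension `n`, whence
`n |A x|² ≤ (n - 1) |A|² |x|²`.
-/

open Finset

theorem card_mul_sq_le_of_sum_eq_zero {ι : Type*} [Fintype ι] {μ : ι → ℝ}
    (hμ : ∑ j, μ j = 0) (i : ι) :
    Fintype.card ι * μ i ^ 2 ≤ (Fintype.card ι - 1) * ∑ j, μ j ^ 2 := by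
  classical
  have hsplit (f : ι → ℝ) : ∑ j, f j = f i + ∑ j ∈ univ.erase i, f j :=
    (add_sum_erase _ _ (mem_univ i)).symm
  have hcard : ((univ.erase i).card : ℝ) = Fintype.card ι - 1 := by
    rw [card_erase_of_mem (mem_univ i), card_univ, Nat.cast_pred (Fintype.card_pos_iff.mpr ⟨i⟩)]
  have hμi : μ i = -∑ j ∈ univ.erase i, μ j := by linarith [hsplit μ]
  have hcs := sq_sum_le_card_mul_sum_sq (s := univ.erase i) (f := μ)
  rw [hcard, ← neg_sq, ← hμi] at hcs
  rw [hsplit fun j ↦ μ j ^ 2]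
  nlinarith

namespace Matrix

variable {n : Type*} [Fintype n] [DecidableEq n]

noncomputable def tracelessPart (h : Matrix n n ℝ) : Matrix n n ℝ :=
  h - (h.trace / Fintype.card n) • 1

theorem trace_tracelessPart (h : Matrix n n ℝ) : h.tracelessPart.trace = 0 := by
  rcases eq_or_ne (Fintype.card n : ℝ) 0 with hn | hn
  · have : IsEmpty n := Fintype.card_eq_zero_iff.mp (by exact_mod_cast hn)
    simp [trace]
  · simp [tracelessPart, hn]

theorem IsSymm.isHermitian_tracelessPart {h : Matrix n n ℝ} (hh : h.IsSymm) :
    h.tracelessPart.IsHermitian := by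
  rw [isHermitian_iff_isSymm]
  exact hh.sub (isSymm_one.smul _)

theorem sum_sq_tracelessPart (h : Matrix n n ℝ) :
    ∑ i, ∑ j, h.tracelessPart i j ^ 2 = ∑ i, ∑ j, h i j ^ 2 - h.trace ^ 2 / Fintype.card n := by
  simp only [tracelessPart, sub_apply, smul_apply, one_apply, smul_eq_mul, mul_ite, mul_one,
    mul_zero, sub_sq, ite_pow, sum_add_distrib, sum_sub_distrib]
  simp only [ne_eq, OfNat.ofNat_ne_zero, not_false_eq_true, zero_pow, sum_ite_eq, mem_univ,
    if_true, sum_const, card_univ, nsmul_eq_mul, ← sum_mul, ← mul_sum]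
  rw [show ∑ i, h i i = h.trace from rfl]
  rcases eq_or_ne (Fintype.card n : ℝ) 0 with hn | hn
  · simp [hn]
  · field_simp
    ring

namespace IsHermitian

variable {A : Matrix n n ℝ} (hA : A.IsHermitian)
include hA

open scoped RealInnerProductSpace

theorem toEuclideanLin_eigenvectorBasis (i : n) :
    toEuclideanLin A (hA.eigenvectorBasis i) = hA.eigenvalues i • hA.eigenvectorBasis i := by
  ext j
  simpa using congrFun (hA.mulVec_eigenvectorBasis i) j

theorem inner_eigenvectorBasis_toEuclideanLin (i : n) (v : EuclideanSpace ℝ n) :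
    ⟪hA.eigenvectorBasis i, toEuclideanLin A v⟫ =
      hA.eigenvalues i * ⟪hA.eigenvectorBasis i, v⟫ := by
  rw [← isSymmetric_toEuclideanLin_iff.mpr hA, hA.toEuclideanLin_eigenvectorBasis,
    real_inner_smul_left]

theorem norm_sq_toEuclideanLin (v : EuclideanSpace ℝ n) :
    ‖toEuclideanLin A v‖ ^ 2 = ∑ i, hA.eigenvalues i ^ 2 * ⟪hA.eigenvectorBasis i, v⟫ ^ 2 := by
  simp only [← hA.eigenvectorBasis.sum_sq_inner_right, hA.inner_eigenvectorBasis_toEuclideanLin,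
    mul_pow]

theorem sum_sq_eigenvalues : ∑ i, hA.eigenvalues i ^ 2 = ∑ i, ∑ j, A i j ^ 2 := by
  have hfrob : ∑ i, ∑ j, A i j ^ 2 = (A * A).trace := by
    simp only [trace, diag_apply, mul_apply]
    refine sum_congr rfl fun i _ ↦ sum_congr rfl fun j _ ↦ ?_
    rw [sq, ← hA.apply j i, star_trivial]
  rw [hfrob]
  conv_rhs => rw [hA.spectral_theorem, ← map_mul, Unitary.conjStarAlgAut_apply, trace_mul_cycle,
    Unitary.coe_star_mul_self, one_mul, diagonal_mul_diagonal, trace_diagonal]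
  simp [sq]

theorem card_mul_norm_sq_toEuclideanLin_le (htr : A.trace = 0) (v : EuclideanSpace ℝ n) :
    Fintype.card n * ‖toEuclideanLin A v‖ ^ 2 ≤
      (Fintype.card n - 1) * (∑ i, ∑ j, A i j ^ 2) * ‖v‖ ^ 2 := by
  have hμ : ∑ i, hA.eigenvalues i = 0 := by simpa [hA.trace_eq_sum_eigenvalues] using htr
  rw [hA.norm_sq_toEuclideanLin, ← hA.sum_sq_eigenvalues,
    ← hA.eigenvectorBasis.sum_sq_inner_right v, mul_sum, mul_sum]
  refine sum_le_sum fun i _ ↦ ?_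
  rw [← mul_assoc]
  exact mul_le_mul_of_nonneg_right (card_mul_sq_le_of_sum_eq_zero hμ i) (sq_nonneg _)

end IsHermitian
end Matrix

theorem stmt_0_general (h : Matrix (Fin 3) (Fin 3) ℝ) (x : Fin 3 → ℝ)
    (hsym : h.IsSymm)
    (X : Fin 3 → ℝ)
    (hX : ∀ i, X i = (∑ j, h i j * x j) - (1/3) * h.trace * x i) :
    Real.sqrt (∑ i, X i ^ 2) ≤
      Real.sqrt (2/3) * Real.sqrt (∑ i, x i ^ 2) *
        Real.sqrt ((∑ i, ∑ j, h i j ^ 2) - (1/3) * h.trace ^ 2) := by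
  have hXA : WithLp.toLp 2 X = Matrix.toEuclideanLin h.tracelessPart (WithLp.toLp 2 x) := by
    ext i
    simp [hX, Matrix.tracelessPart, Matrix.mulVec, dotProduct, div_eq_inv_mul]
  have key := hsym.isHermitian_tracelessPart.card_mul_norm_sq_toEuclideanLin_le
    h.trace_tracelessPart (WithLp.toLp 2 x)
  rw [← hXA, Matrix.sum_sq_tracelessPart, EuclideanSpace.real_norm_sq_eq,
    EuclideanSpace.real_norm_sq_eq, Fintype.card_fin] at key
  calc Real.sqrt (∑ i, X i ^ 2)
      ≤ Real.sqrt (2/3 * (∑ i, x i ^ 2) * ((∑ i, ∑ j, h i j ^ 2) - (1/3) * h.trace ^ 2)) :=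
        Real.sqrt_le_sqrt (by linear_combination key / 3)
    _ = _ := by rw [Real.sqrt_mul (by positivity), Real.sqrt_mul (by norm_num)]

/-- refined Kato algebraic step. -/
theorem stmt_0 (h : Matrix (Fin 3) (Fin 3) ℝ) (x : Fin 3 → ℝ)
    (hsym : h.IsSymm) (hx : Real.sqrt (∑ i, x i ^ 2) ≠ 0)
    (X : Fin 3 → ℝ)
    (hX : ∀ i, X i = (∑ j, h i j * x j) - (1/3) * h.trace * x i) :
    Real.sqrt (∑ i, X i ^ 2) ≤
      Real.sqrt (2/3) * Real.sqrt (∑ i, x i ^ 2) *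
        Real.sqrt ((∑ i, ∑ j, h i j ^ 2) - (1/3) * h.trace ^ 2) :=
  stmt_0_general h x hsym X hX
end

section
/- Let h be a symmetric 3×3 real matrix and x ∈ ℝ³ with x ≠ 0 (in the Kato setting |∇|∇u|| = |hx|/|x|). If tr h = −κ|x| for a real number κ, then |x|²|h|² ≥ (1/2)(tr h)²|x|² + (3/2)|hx|² − (tr h)|x|·⟨x/|x|, hx⟩ ≥ (5/4)|hx|² − κ²|x|⁴. -/
open Finset

/-- Polynomial core of the first inequality, via an explicit sum-of-squares identity. -/
lemma stmt2_poly (a b c d e f x0 x1 x2 : ℝ) (hs : 0 < x0^2 + x1^2 + x2^2) :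
    (x0^2+x1^2+x2^2) * (a^2+b^2+c^2+b^2+d^2+e^2+c^2+e^2+f^2)
      ≥ (1/2)*(a+d+f)^2*(x0^2+x1^2+x2^2)
        + (3/2)*((a*x0+b*x1+c*x2)^2+(b*x0+d*x1+e*x2)^2+(c*x0+e*x1+f*x2)^2)
        - (a+d+f)*(x0*(a*x0+b*x1+c*x2)+x1*(b*x0+d*x1+e*x2)+x2*(c*x0+e*x1+f*x2)) := by
  set s := x0^2+x1^2+x2^2 with hsdef
  set m0 := a*x0+b*x1+c*x2
  set m1 := b*x0+d*x1+e*x2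
  set m2 := c*x0+e*x1+f*x2
  set q := x0*m0+x1*m1+x2*m2 with hq
  set T := a+d+f with hT
  set D := (x0^2+x1^2+x2^2) * (a^2+b^2+c^2+b^2+d^2+e^2+c^2+e^2+f^2)
      - ((1/2)*T^2*s + (3/2)*(m0^2+m1^2+m2^2) - T*q) with hD
  have key : (4*s^3)*D
      = 2*s^2*((x0*m1-x1*m0)^2+(x0*m2-x2*m0)^2+(x1*m2-x2*m1)^2)
      + (2*(s^2*a - s*(x0*m0+m0*x0) + q*x0*x0) - (s*T-q)*(s - x0*x0))^2
      + (2*(s^2*d - s*(x1*m1+m1*x1) + q*x1*x1) - (s*T-q)*(s - x1*x1))^2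
      + (2*(s^2*f - s*(x2*m2+m2*x2) + q*x2*x2) - (s*T-q)*(s - x2*x2))^2
      + 2*(2*(s^2*b - s*(x0*m1+m0*x1) + q*x0*x1) + (s*T-q)*(x0*x1))^2
      + 2*(2*(s^2*c - s*(x0*m2+m0*x2) + q*x0*x2) + (s*T-q)*(x0*x2))^2
      + 2*(2*(s^2*e - s*(x1*m2+m1*x2) + q*x1*x2) + (s*T-q)*(x1*x2))^2 := by
    simp only [hD, hsdef, hq, hT]
    ring
  have hpos : (0:ℝ) < 4*s^3 := by positivity
  have hsos : 0 ≤ (4*s^3)*D := by rw [key]; positivity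
  have hDnn : 0 ≤ D := nonneg_of_mul_nonneg_right hsos hpos
  simp only [hD] at hDnn
  linarith

/-- Cauchy–Schwarz in ℝ³, coordinates. -/
lemma stmt2_cs (x0 x1 x2 m0 m1 m2 : ℝ) :
    (x0*m0+x1*m1+x2*m2)^2 ≤ (x0^2+x1^2+x2^2)*(m0^2+m1^2+m2^2) := by
  nlinarith [sq_nonneg (x0*m1-x1*m0), sq_nonneg (x0*m2-x2*m0), sq_nonneg (x1*m2-x2*m1)]

/-- Abstract core of the second inequality (Young's inequality step). -/
lemma stmt2_second (M q r κ : ℝ) (hr : 0 < r) (hCS : q^2 ≤ r^2*M) :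
    1/2*(-κ*r)^2*(r^2) + 3/2*M - (-κ*r)*q ≥ 5/4*M - κ^2*(r^2)^2 := by
  nlinarith [hCS, sq_nonneg (q+2*κ*r^3), sq_nonneg (κ*r^3), mul_pos hr hr, sq_nonneg r]

/-- Coordinate form of the full statement. -/
lemma stmt2_core (a b c d e f x0 x1 x2 κ r : ℝ) (hr : 0 < r)
    (hr2 : r^2 = x0^2+x1^2+x2^2) (htr : a + d + f = -κ * r) :
    (x0^2+x1^2+x2^2) * (a^2+b^2+c^2+(b^2+d^2+e^2)+(c^2+e^2+f^2))
      ≥ 1/2*(a+d+f)^2*(x0^2+x1^2+x2^2)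
        + 3/2*((a*x0+b*x1+c*x2)^2+(b*x0+d*x1+e*x2)^2+(c*x0+e*x1+f*x2)^2)
        - (a+d+f)*r*(x0/r*(a*x0+b*x1+c*x2)+x1/r*(b*x0+d*x1+e*x2)+x2/r*(c*x0+e*x1+f*x2))
    ∧ 1/2*(a+d+f)^2*(x0^2+x1^2+x2^2)
        + 3/2*((a*x0+b*x1+c*x2)^2+(b*x0+d*x1+e*x2)^2+(c*x0+e*x1+f*x2)^2)
        - (a+d+f)*r*(x0/r*(a*x0+b*x1+c*x2)+x1/r*(b*x0+d*x1+e*x2)+x2/r*(c*x0+e*x1+f*x2))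
      ≥ 5/4*((a*x0+b*x1+c*x2)^2+(b*x0+d*x1+e*x2)^2+(c*x0+e*x1+f*x2)^2)
        - κ^2*(x0^2+x1^2+x2^2)^2 := by
  have hs : 0 < x0^2+x1^2+x2^2 := hr2 ▸ (by positivity)
  have hrne : r ≠ 0 := ne_of_gt hr
  have hdiv : (a+d+f)*r*(x0/r*(a*x0+b*x1+c*x2)+x1/r*(b*x0+d*x1+e*x2)+x2/r*(c*x0+e*x1+f*x2))
      = (a+d+f)*(x0*(a*x0+b*x1+c*x2)+x1*(b*x0+d*x1+e*x2)+x2*(c*x0+e*x1+f*x2)) := by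
    field_simp
  rw [hdiv]
  constructor
  · have := stmt2_poly a b c d e f x0 x1 x2 hs
    linarith
  · have hCS : (x0*(a*x0+b*x1+c*x2)+x1*(b*x0+d*x1+e*x2)+x2*(c*x0+e*x1+f*x2))^2
        ≤ r^2*((a*x0+b*x1+c*x2)^2+(b*x0+d*x1+e*x2)^2+(c*x0+e*x1+f*x2)^2) := by
      rw [hr2]
      exact stmt2_cs x0 x1 x2 _ _ _
    have h2 := stmt2_second ((a*x0+b*x1+c*x2)^2+(b*x0+d*x1+e*x2)^2+(c*x0+e*x1+f*x2)^2)
      (x0*(a*x0+b*x1+c*x2)+x1*(b*x0+d*x1+e*x2)+x2*(c*x0+e*x1+f*x2)) r κ hr hCS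
    rw [htr, ← hr2]
    linarith

/-- pointwise inequality underlying the refined Kato inequality. -/
theorem stmt_2 (h : Matrix (Fin 3) (Fin 3) ℝ) (x : Fin 3 → ℝ) (κ : ℝ)
    (hsym : h.IsSymm) (hx : x ≠ 0)
    (htr : h.trace = -κ * Real.sqrt (∑ i, x i ^ 2)) :
    (∑ i, x i ^ 2) * (∑ i, ∑ j, h i j ^ 2)
      ≥ (1/2) * h.trace ^ 2 * (∑ i, x i ^ 2)
        + (3/2) * (∑ i, (h.mulVec x i) ^ 2)
        - h.trace * Real.sqrt (∑ i, x i ^ 2) *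
            (∑ i, (x i / Real.sqrt (∑ l, x l ^ 2)) * h.mulVec x i)
    ∧ (1/2) * h.trace ^ 2 * (∑ i, x i ^ 2)
        + (3/2) * (∑ i, (h.mulVec x i) ^ 2)
        - h.trace * Real.sqrt (∑ i, x i ^ 2) *
            (∑ i, (x i / Real.sqrt (∑ l, x l ^ 2)) * h.mulVec x i)
      ≥ (5/4) * (∑ i, (h.mulVec x i) ^ 2) - κ ^ 2 * (∑ i, x i ^ 2) ^ 2 := by
  have hb10 := hsym.apply 0 1
  have hb20 := hsym.apply 0 2
  have hb21 := hsym.apply 1 2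
  have hs : (0:ℝ) < ∑ i, x i ^ 2 := by
    obtain ⟨i, hi⟩ := Function.ne_iff.mp hx
    exact Finset.sum_pos' (fun j _ => sq_nonneg _)
      ⟨i, Finset.mem_univ i, pow_pos (abs_pos.mpr hi) 2 |>.trans_le (by rw [sq_abs])⟩
  have hr : (0:ℝ) < Real.sqrt (∑ i, x i ^ 2) := Real.sqrt_pos.mpr hs
  have hr2 : (Real.sqrt (∑ i, x i ^ 2))^2 = ∑ i, x i ^ 2 := Real.sq_sqrt hs.le
  simp only [Fin.sum_univ_three, Matrix.mulVec, Matrix.trace, Matrix.diag,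
    dotProduct, Fin.sum_univ_three] at htr hr hr2 ⊢
  rw [hb10, hb20, hb21]
  exact stmt2_core (h 0 0) (h 0 1) (h 0 2) (h 1 1) (h 1 2) (h 2 2) (x 0) (x 1) (x 2) κ _
    hr hr2 htr
end

section
/- Let β ∈ (0,1), λ > 0, and suppose f: [r₀,∞) → ℝ satisfies |f(r)| ≤ C₁ r^{−2−β}. Define L w̄ = w̄'' + (2/r)w̄' + e(r)w̄'' + a(r)w̄' with |e(r)| ≤ C r^{−q} and |a(r)| ≤ C r^{−q−1}, q > 0, and w̄(r) = λ r^{−β}. Then there exist r₁ ≥ r₀ and λ₀ > 0 such that for all λ ≥ λ₀ and r ≥ r₁, L w̄(r) ≤ −|f(r)|. -/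
/-!
For `w = l r^p` one computes `L w = l p r^(p-2) (p + 1 + e (p - 1) + a r)`. With `p = -β` the
bracket tends to `1 - β > 0`, because `e` and `r a` are `O(r^(-q))`; so for large `r` it exceeds
`(1 - β)/2`, and then `L w̄ ≤ -λ β (1 - β)/2 · r^(-2-β) ≤ -C₁ r^(-2-β) ≤ -|f|`
as soon as `λ ≥ 2 C₁ / (β (1 - β))`.
-/

open Filter Topology

noncomputable def perturbedRadialOp (e a w : ℝ → ℝ) (r : ℝ) : ℝ :=
  deriv (deriv w) r + (2 / r) * deriv w r + e r * deriv (deriv w) r + a r * deriv w r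

lemma deriv_const_mul_rpow {l p r : ℝ} (hr : 0 < r) :
    deriv (fun s : ℝ => l * s ^ p) r = l * p * r ^ (p - 1) := by
  rw [((Real.hasDerivAt_rpow_const (Or.inl hr.ne')).const_mul l).deriv, mul_assoc]

lemma deriv_deriv_const_mul_rpow {l p r : ℝ} (hr : 0 < r) :
    deriv (deriv fun s : ℝ => l * s ^ p) r = l * p * (p - 1) * r ^ (p - 2) := by
  have h : deriv (fun s : ℝ => l * s ^ p) =ᶠ[𝓝 r] fun s => l * p * s ^ (p - 1) := by
    filter_upwards [eventually_gt_nhds hr] with s hs using deriv_const_mul_rpow hs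
  rw [h.deriv_eq, deriv_const_mul_rpow hr, sub_sub, one_add_one_eq_two]

lemma perturbedRadialOp_const_mul_rpow (e a : ℝ → ℝ) {l p r : ℝ} (hr : 0 < r) :
    perturbedRadialOp e a (fun s => l * s ^ p) r
      = l * p * r ^ (p - 2) * (p + 1 + e r * (p - 1) + a r * r) := by
  have hpow : r ^ (p - 1) = r ^ (p - 2) * r := by
    rw [← Real.rpow_add_one hr.ne']; ring_nf
  rw [perturbedRadialOp, deriv_deriv_const_mul_rpow hr, deriv_const_mul_rpow hr, hpow]
  field_simp
  ring

lemma tendsto_zero_of_abs_le_mul_rpow_neg {g : ℝ → ℝ} {q C r₀ : ℝ} (hq : 0 < q)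
    (hg : ∀ r ≥ r₀, |g r| ≤ C * r ^ (-q)) : Tendsto g atTop (𝓝 0) := by
  refine squeeze_zero_norm' (eventually_atTop.2 ⟨r₀, hg⟩) ?_
  simpa using (tendsto_rpow_neg_atTop hq).const_mul C

lemma tendsto_mul_self_zero_of_abs_le_mul_rpow_neg_sub_one {g : ℝ → ℝ} {q C r₀ : ℝ}
    (hq : 0 < q) (hg : ∀ r ≥ r₀, |g r| ≤ C * r ^ (-q - 1)) :
    Tendsto (fun r => g r * r) atTop (𝓝 0) := by
  refine tendsto_zero_of_abs_le_mul_rpow_neg (C := C) (r₀ := max r₀ 1) hq fun r hr => ?_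
  have hr0 : 0 < r := one_pos.trans_le (le_of_max_le_right hr)
  calc |g r * r| = |g r| * r := by rw [abs_mul, abs_of_pos hr0]
    _ ≤ C * r ^ (-q - 1) * r := by gcongr; exact hg r (le_of_max_le_left hr)
    _ = C * r ^ (-q) := by rw [Real.rpow_sub_one hr0.ne']; field_simp

lemma eventually_lt_add_perturbation {p c q C r₀ : ℝ} {e a : ℝ → ℝ} (hc : c < p + 1)
    (hq : 0 < q) (he : ∀ r ≥ r₀, |e r| ≤ C * r ^ (-q)) (ha : ∀ r ≥ r₀, |a r| ≤ C * r ^ (-q - 1)) :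
    ∀ᶠ r in atTop, c < p + 1 + e r * (p - 1) + a r * r := by
  refine Tendsto.eventually_const_lt hc ?_
  convert (tendsto_const_nhds.add ((tendsto_zero_of_abs_le_mul_rpow_neg hq he).mul_const
    (p - 1))).add (tendsto_mul_self_zero_of_abs_le_mul_rpow_neg_sub_one hq ha) using 2
  ring

theorem stmt_12_general (b q C C₁ r₀ : ℝ) (hb : b ∈ Set.Ioo (0:ℝ) 1) (hq : 0 < q)
    (hC₁ : 0 ≤ C₁)
    (f e a : ℝ → ℝ)
    (hf : ∀ r ≥ r₀, |f r| ≤ C₁ * r ^ (-2 - b))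
    (he : ∀ r ≥ r₀, |e r| ≤ C * r ^ (-q))
    (ha : ∀ r ≥ r₀, |a r| ≤ C * r ^ (-q - 1)) :
    ∃ r₁ ≥ r₀, ∃ l₀ > (0:ℝ), ∀ l ≥ l₀, ∀ r ≥ r₁,
      deriv (deriv (fun s : ℝ => l * s ^ (-b))) r
        + (2 / r) * deriv (fun s : ℝ => l * s ^ (-b)) r
        + e r * deriv (deriv (fun s : ℝ => l * s ^ (-b))) r
        + a r * deriv (fun s : ℝ => l * s ^ (-b)) r
      ≤ -|f r| := by
  obtain ⟨hb0, hb1⟩ := hb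
  have hc : 0 < b * (1 - b) := mul_pos hb0 (sub_pos.2 hb1)
  obtain ⟨r₁, hr₁⟩ := eventually_atTop.1
    ((eventually_lt_add_perturbation (p := -b) (c := (1 - b) / 2) (by linarith) hq he ha).and
      (eventually_gt_atTop 0))
  refine ⟨max r₁ r₀, le_max_right _ _, 2 * C₁ / (b * (1 - b)) + 1,
    add_pos_of_nonneg_of_pos (by positivity) one_pos, fun l hl r hr => ?_⟩
  obtain ⟨hB, hr0⟩ := hr₁ r (le_of_max_le_left hr)
  change perturbedRadialOp e a (fun s => l * s ^ (-b)) r ≤ -|f r|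
  rw [perturbedRadialOp_const_mul_rpow e a hr0, show -b - 2 = -2 - b by ring]
  set B := -b + 1 + e r * (-b - 1) + a r * r
  have hl0 : 0 ≤ l := le_trans (by positivity) hl
  have hlB : C₁ ≤ l * b * B :=
    calc C₁ = 2 * C₁ / (b * (1 - b)) * (b * (1 - b) / 2) := by field_simp
      _ ≤ l * (b * (1 - b) / 2) := by gcongr; linarith
      _ = l * b * ((1 - b) / 2) := by ring
      _ ≤ l * b * B := by gcongr
  calc l * -b * r ^ (-2 - b) * B = -(l * b * B) * r ^ (-2 - b) := by ring
    _ ≤ -C₁ * r ^ (-2 - b) := by gcongr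
    _ ≤ -|f r| := by linarith [hf r (le_of_max_le_right hr)]

/-- the quantitative barrier estimate of Section 4.2: for the
perturbed radial operator `L w̄ = w̄'' + (2/r)w̄' + e(r)w̄'' + a(r)w̄'` with
`|e| ≤ Cr^{−q}`, `|a| ≤ Cr^{−q−1}`, and `|f| ≤ C₁ r^{−2−β}`, the barrier
`w̄ = λ r^{−β}` satisfies `L w̄ ≤ −|f|` for all `λ ≥ λ₀` and `r ≥ r₁`. -/
theorem stmt_12 (b q C C₁ r₀ : ℝ) (hb : b ∈ Set.Ioo (0:ℝ) 1) (hq : 0 < q)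
    (hC : 0 ≤ C) (hC₁ : 0 ≤ C₁) (hr₀ : 0 < r₀)
    (f e a : ℝ → ℝ)
    (hf : ∀ r ≥ r₀, |f r| ≤ C₁ * r ^ (-2 - b))
    (he : ∀ r ≥ r₀, |e r| ≤ C * r ^ (-q))
    (ha : ∀ r ≥ r₀, |a r| ≤ C * r ^ (-q - 1)) :
    ∃ r₁ ≥ r₀, ∃ l₀ > (0:ℝ), ∀ l ≥ l₀, ∀ r ≥ r₁,
      deriv (deriv (fun s : ℝ => l * s ^ (-b))) r
        + (2 / r) * deriv (fun s : ℝ => l * s ^ (-b)) r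
        + e r * deriv (deriv (fun s : ℝ => l * s ^ (-b))) r
        + a r * deriv (fun s : ℝ => l * s ^ (-b)) r
      ≤ -|f r| :=
  stmt_12_general b q C C₁ r₀ hb hq hC₁ f e a hf he ha
end
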